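/- If δ_X is height-normal and outputs y₁,…,yₙ satisfy Downward-Validity, Upward-Validity, and Comparability with respect to inputs x₁,…,xₙ, then they satisfy D'-Tightness, where D' = max_i δ_X(x_i, ⊔_j x_j). -/
import Mathlib


open scoped ENNReal

/-- with a height-normal quasi-metric, outputs of standard lattice
agreement satisfy D'-Tightness, where D' = max_i δ(x_i, ⊔_j x_j). -/
theorem stmt6 {X : Type*} [SemilatticeSup X] {n : ℕ} [NeZero n]
    (δ : X → X → ℝ≥0∞)
    (hnormal : ∀ a b c : X, a ≤ b → b ≤ c → δ a b ≤ δ a c ∧ δ b c ≤ δ a c)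
    (x y : Fin n → X)
    (hDV : ∀ i, x i ≤ y i)
    (hUV : ∀ i, y i ≤ Finset.univ.sup' Finset.univ_nonempty x)
    (hcomp : ∀ i j, y i ≤ y j ∨ y j ≤ y i) :
    ∀ i j, y i ≤ y j → δ (y i) (y j) ≤
      ⨆ i : Fin n, δ (x i) (Finset.univ.sup' Finset.univ_nonempty x) := by
  intro i j hij
  set S := Finset.univ.sup' Finset.univ_nonempty x
  have h1 : δ (y i) (y j) ≤ δ (y i) S := (hnormal _ _ _ hij (hUV j)).1
  have h2 : δ (y i) S ≤ δ (x i) S := (hnormal _ _ _ (hDV i) (hUV i)).2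
  exact le_trans (le_trans h1 h2) (le_iSup (fun k => δ (x k) S) i)
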